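/- arXiv:2010.14695 — 2 statements merged into one kernel-verified Lean document; each statement's English description precedes it below -/
import Mathlib

section
/- Let X be a continuous stochastic process, r : ℝ → [0,∞] a function, and τ = inf{t ≥ 0 : t ≥ r(X_t)}. If x < y, t ≥ s ≥ max(r(x), r(y)), and ς is any (possibly random) time with X_ς ∈ (x,y) and τ ≥ ς ≥ t, then X_s ∈ (x,y). -/
open Set MeasureTheory
open scoped ENNReal

/-- Pathwise corridor lemma: if a continuous path is strictly inside the corridor `(x,y)`
at a time `ς` with `t ≤ ς` and `ς` before the Root stopping time
`τ = inf {u ≥ 0 | u ≥ r (X u)}`, and the barrier values at the walls satisfy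
`r x ∨ r y ≤ s ≤ t`, then the path was already inside `(x,y)` at time `s`. -/
theorem stmt0 (X : ℝ → ℝ) (hX : Continuous X) (r : ℝ → ℝ≥0∞)
    (x y s t ς : ℝ) (hxy : x < y)
    (hs0 : 0 ≤ s) (hst : s ≤ t)
    (hsx : r x ≤ ENNReal.ofReal s) (hsy : r y ≤ ENNReal.ofReal s)
    (hςmem : X ς ∈ Set.Ioo x y) (htς : t ≤ ς)
    (hςτ : ς ≤ sInf {u : ℝ | 0 ≤ u ∧ r (X u) ≤ ENNReal.ofReal u}) :
    X s ∈ Set.Ioo x y := by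
  set S : Set ℝ := {u : ℝ | 0 ≤ u ∧ r (X u) ≤ ENNReal.ofReal u}
  have hsς : s ≤ ς := hst.trans htς
  have hbdd : BddBelow S := ⟨0, fun u hu => hu.1⟩
  -- key: any u ∈ [s, ς] with X u = x or X u = y leads to contradiction
  have key : ∀ u ∈ Set.Icc s ς, X u ≠ x ∧ X u ≠ y := by
    intro u hu
    have hu0 : 0 ≤ u := hs0.trans hu.1
    have hmono : ENNReal.ofReal s ≤ ENNReal.ofReal u := ENNReal.ofReal_le_ofReal hu.1
    have hmain : ∀ (z : ℝ), X u = z → r z ≤ ENNReal.ofReal s → X ς ≠ z → False := by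
      intro z hz hrz hne
      have huS : u ∈ S := ⟨hu0, by rw [hz]; exact hrz.trans hmono⟩
      have h1 : sInf S ≤ u := csInf_le hbdd huS
      have huς : u = ς := le_antisymm hu.2 (hςτ.trans h1)
      exact hne (huς ▸ hz)
    constructor
    · intro hz; exact hmain x hz hsx (ne_of_gt hςmem.1)
    · intro hz; exact hmain y hz hsy (ne_of_lt hςmem.2)
  by_contra hmem
  rcases hςmem with ⟨hx, hy⟩
  rcases not_and_or.mp hmem with h | h
  · push_neg at h
    have : x ∈ Set.Icc (X s) (X ς) := ⟨h, le_of_lt hx⟩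
    obtain ⟨u, hu, hXu⟩ := intermediate_value_Icc hsς hX.continuousOn this
    exact (key u hu).1 hXu
  · push_neg at h
    have : y ∈ Set.Icc (X ς) (X s) := ⟨le_of_lt hy, h⟩
    obtain ⟨u, hu, hXu⟩ := intermediate_value_Icc' hsς hX.continuousOn this
    exact (key u hu).2 hXu
end

section
/- Let X be a continuous process, r : ℝ → [0,∞], τ = inf{t ≥ 0 : t ≥ r(X_t)}, and define μ_t[A] = P[X_{t∧τ} ∈ A] and μ[A] = P[X_τ ∈ A] (assuming τ < ∞ a.s.). If x < y and t ≥ max(r(x), r(y)), then μ[(x,y)] ≤ μ_t[(x,y)]. -/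
open Set MeasureTheory
open scoped ENNReal

/-- If `t ≥ r x ∨ r y` with `x < y`, then the law `μ` of `X_τ` puts at most as much mass
in the corridor `(x,y)` as the law `μ_t` of `X_{t ∧ τ}` does, where
`τ = inf {u ≥ 0 | u ≥ r (X u)}` is the Root stopping time, assumed a.s. finite. -/
theorem stmt1 {Ω : Type*} [MeasurableSpace Ω] (P : Measure Ω) [IsProbabilityMeasure P]
    (X : ℝ → Ω → ℝ) (hX : ∀ ω, Continuous fun u => X u ω)
    (r : ℝ → ℝ≥0∞) (τ : Ω → ℝ)
    (hτ : ∀ ω, τ ω = sInf {u : ℝ | 0 ≤ u ∧ r (X u ω) ≤ ENNReal.ofReal u})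
    (hτfin : ∀ᵐ ω ∂P, {u : ℝ | 0 ≤ u ∧ r (X u ω) ≤ ENNReal.ofReal u}.Nonempty)
    (x y t : ℝ) (hxy : x < y) (ht0 : 0 ≤ t)
    (htx : r x ≤ ENNReal.ofReal t) (hty : r y ≤ ENNReal.ofReal t) :
    P {ω | X (τ ω) ω ∈ Set.Ioo x y} ≤ P {ω | X (min t (τ ω)) ω ∈ Set.Ioo x y} := by
  refine measure_mono fun ω hω => ?_
  simp only [Set.mem_setOf_eq, Set.mem_Ioo] at hω ⊢
  rcases le_or_gt (τ ω) t with h | h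
  · rwa [min_eq_right h]
  rw [min_eq_left h.le]
  by_contra hc
  have hbdd : BddBelow {u : ℝ | 0 ≤ u ∧ r (X u ω) ≤ ENNReal.ofReal u} :=
    ⟨0, fun u hu => hu.1⟩
  have hcont : ContinuousOn (fun u => X u ω) (Icc t (τ ω)) := (hX ω).continuousOn
  have key : ∀ c : ℝ, r c ≤ ENNReal.ofReal t →
      c ∈ Icc (X t ω) (X (τ ω) ω) ∪ Icc (X (τ ω) ω) (X t ω) → X (τ ω) ω = c := by
    intro c hrc hcm
    obtain ⟨u, hu, hXu⟩ : ∃ u ∈ Icc t (τ ω), X u ω = c := by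
      rcases hcm with hcm | hcm
      · exact intermediate_value_Icc h.le hcont hcm
      · exact intermediate_value_Icc' h.le hcont hcm
    have huS : u ∈ {u : ℝ | 0 ≤ u ∧ r (X u ω) ≤ ENNReal.ofReal u} := by
      refine ⟨le_trans ht0 hu.1, ?_⟩
      rw [hXu]
      exact hrc.trans (ENNReal.ofReal_le_ofReal hu.1)
    have hle : τ ω ≤ u := by rw [hτ ω]; exact csInf_le hbdd huS
    have heq : u = τ ω := le_antisymm hu.2 hle
    rw [← heq, hXu]
  rcases not_and_or.mp hc with hcx | hcy
  · push_neg at hcx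
    have := key x htx (Or.inl ⟨hcx, hω.1.le⟩)
    exact hω.1.ne' this
  · push_neg at hcy
    have := key y hty (Or.inr ⟨hω.2.le, hcy⟩)
    exact hω.2.ne this
end
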